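/- Let μ₁, μ₂, g₁, g₂ : [0,∞) → [0,∞) be continuously differentiable bounded functions vanishing at 0 and positive on (0,∞), b₁, b₂ ≥ 0, and define κ(σ) := (d/dσ) ln(g₁(σ)/g₂(σ)). Assume there are constants a, c > 0 such that either (A3) κ(σ) ≠ 0 and (μ₂(σ) − μ₁(σ) + b₁ − b₂)/κ(σ) ≤ −aσ² − c for all σ ∈ (0,∞), or (A4) κ(σ) ≠ 0 and (μ₂(σ) − μ₁(σ) + b₁ − b₂)/κ(σ) ≥ aσ² + c for all σ ∈ (0,∞). Then for every r ≥ c⁻¹ + a⁻¹ the two-species chemostat is strongly observable in time r: for any measurable bounded D, s_in : [0,r] → [0,∞), if (x₁, x₂, s) and (χ₁, χ₂, σ) are two solutions (continuous functions satisfying the integral equations) with x-components positive and s-components taking values in (0,∞), and s(t) = σ(t) for all t ∈ [0,r], then (x₁(0), x₂(0)) = (χ₁(0), χ₂(0)). -/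

import Mathlib

/-
Since the outputs agree, both solutions share the substrate `s`, so every species obeys a linear
equation `ẋ = (μᵢ(s) - D - bᵢ) x` with the same coefficient in both solutions and equals
`xᵢ(0) exp(∫ (μᵢ(s) - D - bᵢ))`; comparing the two substrate equations gives
`g₁(s)(x₁ - χ₁) + g₂(s)(x₂ - χ₂) = 0`. If the initial states differ, this forces
`g₁(s)/g₂(s) = k exp(∫₀ᵗ (μ₂(s) - μ₁(s) + b₁ - b₂))` with `k > 0`, so `ln(g₁/g₂) ∘ s` is
differentiable and, by the inverse function theorem, `ṡ = (μ₂(s) - μ₁(s) + b₁ - b₂)/κ(s)`.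
Under (A3) this says `ṡ ≤ -a s² - c`: then `1/s` grows at rate at least `a`, pushing `s` below `1`
by time `1/a`, after which `s` decreases at rate at least `c` and would be negative by time
`1/a + 1/c`. (A4) is (A3) for the time-reversed substrate `s(r - t)`.
-/

open Real Set Filter Topology MeasureTheory intervalIntegral

theorem LipschitzOnWith.comp_absolutelyContinuousOnInterval {X Y : Type*} [PseudoMetricSpace X]
    [PseudoMetricSpace Y] {φ : X → Y} {K : NNReal} {t : Set X} {f : ℝ → X} {a b : ℝ}
    (hφ : LipschitzOnWith K φ t) (hf : AbsolutelyContinuousOnInterval f a b)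
    (hft : MapsTo f (uIcc a b) t) : AbsolutelyContinuousOnInterval (φ ∘ f) a b := by
  unfold AbsolutelyContinuousOnInterval at hf ⊢
  refine squeeze_zero' (.of_forall fun E => Finset.sum_nonneg fun _ _ => dist_nonneg) ?_
    (by simpa using hf.const_mul (K : ℝ))
  filter_upwards [mem_inf_of_right (mem_principal_self _)] with E hE
  rw [Finset.mul_sum]
  gcongr with i hi
  exact hφ.dist_le_mul _ (hft (hE.1 i hi).1) _ (hft (hE.1 i hi).2)

theorem ContDiff.comp_absolutelyContinuousOnInterval {E F : Type*} [NormedAddCommGroup E]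
    [NormedSpace ℝ E] [ProperSpace E] [NormedAddCommGroup F] [NormedSpace ℝ F]
    {φ : E → F} {f : ℝ → E} {a b : ℝ}
    (hφ : ContDiff ℝ 1 φ) (hf : AbsolutelyContinuousOnInterval f a b) :
    AbsolutelyContinuousOnInterval (φ ∘ f) a b := by
  obtain ⟨C, hC⟩ := hf.exists_bound
  obtain ⟨K, hK⟩ := hφ.contDiffOn.exists_lipschitzOnWith one_ne_zero (convex_closedBall 0 C)
    (isCompact_closedBall 0 C)
  exact hK.comp_absolutelyContinuousOnInterval hf fun x hx => mem_closedBall_zero_iff.2 (hC x hx)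

theorem eq_mul_exp_integral_of_eq_add_integral {h z : ℝ → ℝ} {a b : ℝ}
    (hh : IntervalIntegrable h volume a b)
    (hzc : ContinuousOn z (uIcc a b))
    (hz : ∀ t ∈ uIcc a b, z t = z a + ∫ τ in a..t, h τ * z τ) :
    ∀ t ∈ uIcc a b, z t = z a * exp (∫ τ in a..t, h τ) := by
  have hhz : IntervalIntegrable (fun t => h t * z t) volume a b := hh.mul_continuousOn hzc
  have hw : AbsolutelyContinuousOnInterval (fun t => z a + ∫ τ in a..t, h τ * z τ) a b :=
    contDiffOn_const.absolutelyContinuousOnInterval.fun_add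
      (hhz.absolutelyContinuousOnInterval_intervalIntegral left_mem_uIcc)
  -- `h` is only integrable, so `z` is only absolutely continuous: `z · exp (-∫ h)` is shown to be
  -- absolutely continuous with derivative `0` almost everywhere.
  have hE : AbsolutelyContinuousOnInterval (fun t => exp (-∫ τ in a..t, h τ)) a b :=
    contDiff_exp.comp_absolutelyContinuousOnInterval
      (hh.absolutelyContinuousOnInterval_intervalIntegral left_mem_uIcc).fun_neg
  obtain ⟨C, hC⟩ := (hw.fun_mul hE).const_of_ae_hasDerivAt_zero <| by
    filter_upwards [hh.ae_hasDerivAt_integral, hhz.ae_hasDerivAt_integral] with x hH hhz' hx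
    refine (((hhz' hx a left_mem_uIcc).const_add (z a)).mul
      (hH hx a left_mem_uIcc).neg.exp).congr_deriv ?_
    rw [← hz x hx]
    ring
  intro t ht
  have h0 := hC a left_mem_uIcc
  have ht' := hC t ht
  simp only [integral_same, add_zero, neg_zero, exp_zero, mul_one] at h0
  calc z t = (z a + ∫ τ in a..t, h τ * z τ) * exp (-∫ τ in a..t, h τ)
        * exp (∫ τ in a..t, h τ) := by
        rw [mul_assoc, ← exp_add, neg_add_cancel, exp_zero, mul_one, ← hz t ht]
    _ = z a * exp (∫ τ in a..t, h τ) := by rw [ht', ← h0]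

theorem eqOn_of_forall_integral_eq {f g : ℝ → ℝ} {a b : ℝ} (hab : a < b)
    (hf : IntervalIntegrable f volume a b) (hg : IntervalIntegrable g volume a b)
    (hfg : ContinuousOn (f - g) (Icc a b))
    (h : ∀ t ∈ Icc a b, ∫ τ in a..t, f τ = ∫ τ in a..t, g τ) : EqOn f g (Icc a b) := by
  have hsub : ∀ t ∈ Icc a b, uIcc a t ⊆ uIcc a b := fun t ht =>
    uIcc_subset_uIcc left_mem_uIcc (Icc_subset_uIcc ht)
  have hzero : ∀ t ∈ Icc a b, ∫ τ in a..t, (f τ - g τ) = 0 := fun t ht => by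
    rw [integral_sub (hf.mono_set (hsub t ht)) (hg.mono_set (hsub t ht)), h t ht, sub_self]
  suffices EqOn (f - g) 0 (Icc a b) from fun t ht => sub_eq_zero.1 (this ht)
  refine EqOn.of_subset_closure (fun t ht => ?_) hfg continuousOn_const Ioo_subset_Icc_self
    (closure_Ioo hab.ne).ge
  have hnhds : Icc a b ∈ 𝓝 t := Icc_mem_nhds ht.1 ht.2
  have hderiv : HasDerivAt (fun u => ∫ τ in a..u, (f τ - g τ)) (f t - g t) t :=
    integral_hasDerivAt_right ((hf.sub hg).mono_set (hsub t (Ioo_subset_Icc_self ht)))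
      ((hfg.mono Ioo_subset_Icc_self).stronglyMeasurableAtFilter isOpen_Ioo t ht)
      (hfg.continuousAt hnhds)
  exact hderiv.unique ((hasDerivAt_const t 0).congr_of_eventuallyEq
    (eventually_of_mem hnhds hzero))

theorem HasStrictDerivAt.hasDerivAt_of_eventuallyEq_comp {L s F : ℝ → ℝ} {L' F' t : ℝ}
    (hL : HasStrictDerivAt L L' (s t)) (hL' : L' ≠ 0) (hs : ContinuousAt s t)
    (hF : HasDerivAt F F' t) (hLs : (fun u => L (s u)) =ᶠ[𝓝 t] F) :
    HasDerivAt s (F' / L') t := by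
  have hinv := hL.to_localInverse hL'
  rw [hLs.eq_of_nhds] at hinv
  refine (hinv.hasDerivAt.comp t hF).congr_of_eventuallyEq ?_ |>.congr_deriv (by ring)
  filter_upwards [hs.eventually (hL.eventually_left_inverse hL'), hLs] with u hu hLu
  rw [Function.comp_apply, ← hLu, hu]

theorem Measurable.intervalIntegrable_of_nonneg_of_le {f : ℝ → ℝ} {a b C : ℝ}
    (hf : Measurable f) (hab : a ≤ b) (h0 : ∀ t ∈ Icc a b, 0 ≤ f t)
    (hC : ∀ t ∈ Icc a b, f t ≤ C) : IntervalIntegrable f volume a b :=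
  (intervalIntegrable_iff_integrableOn_Icc_of_le hab).2 <|
    .of_bound measure_Icc_lt_top hf.aestronglyMeasurable C <|
      (ae_restrict_iff' measurableSet_Icc).2 <| .of_forall fun t ht => by
        rw [norm_of_nonneg (h0 t ht)]
        exact hC t ht

theorem antitoneOn_Icc_of_hasDerivAt_nonpos {f f' : ℝ → ℝ} {a b : ℝ}
    (hf : ContinuousOn f (Icc a b)) (hf' : ∀ t ∈ Ioo a b, HasDerivAt f (f' t) t)
    (hle : ∀ t ∈ Ioo a b, f' t ≤ 0) : AntitoneOn f (Icc a b) := by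
  refine antitoneOn_of_hasDerivWithinAt_nonpos (f' := f') (convex_Icc a b) hf
    (fun t ht => ?_) ?_ <;> rw [interior_Icc] at *
  exacts [(hf' t ht).hasDerivWithinAt, hle]

theorem lt_inv_add_inv_of_hasDerivAt_le_neg_sq_sub {s s' : ℝ → ℝ} {a c r : ℝ} (ha : 0 < a)
    (hc : 0 < c) (hs : ContinuousOn s (Icc 0 r)) (hpos : ∀ t ∈ Icc 0 r, 0 < s t)
    (hs' : ∀ t ∈ Ioo 0 r, HasDerivAt s (s' t) t)
    (hle : ∀ t ∈ Ioo 0 r, s' t ≤ -a * s t ^ 2 - c) : r < a⁻¹ + c⁻¹ := by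
  by_contra! hr
  have h0 : (0 : ℝ) ∈ Icc 0 r := ⟨le_rfl, (by positivity : (0 : ℝ) ≤ a⁻¹ + c⁻¹).trans hr⟩
  have ha' : a⁻¹ ∈ Icc 0 r := ⟨by positivity, by linarith [inv_pos.2 hc]⟩
  have hac : a⁻¹ + c⁻¹ ∈ Icc 0 r := ⟨by positivity, hr⟩
  have hpos' : ∀ t ∈ Ioo 0 r, 0 < s t := fun t ht => hpos t (Ioo_subset_Icc_self ht)
  have hrecip : AntitoneOn (fun t => a * t - (s t)⁻¹) (Icc 0 r) :=
    antitoneOn_Icc_of_hasDerivAt_nonpos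
      ((continuousOn_const.mul continuousOn_id).sub (hs.inv₀ fun t ht => (hpos t ht).ne'))
      (fun t ht => ((hasDerivAt_id t).const_mul a).sub ((hs' t ht).inv (hpos' t ht).ne'))
      fun t ht => by
        have : s' t / s t ^ 2 ≤ -a := by
          rw [div_le_iff₀ (pow_pos (hpos' t ht) 2)]
          nlinarith [hle t ht]
        rw [neg_div, mul_one]
        linarith
  have hlin : AntitoneOn (fun t => s t + c * t) (Icc 0 r) :=
    antitoneOn_Icc_of_hasDerivAt_nonpos (hs.add (continuousOn_const.mul continuousOn_id))
      (fun t ht => (hs' t ht).add ((hasDerivAt_id t).const_mul c))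
      fun t ht => by nlinarith [hle t ht, hpos' t ht]
  have h1 := hrecip h0 ha' ha'.1
  have h2 := hlin ha' hac (by linarith [inv_pos.2 hc])
  simp only [mul_zero, zero_sub, mul_inv_cancel₀ ha.ne', mul_add, mul_inv_cancel₀ hc.ne']
    at h1 h2
  have hsa_inv : 1 < (s a⁻¹)⁻¹ := by linarith [inv_pos.2 (hpos 0 h0)]
  have hsa : s a⁻¹ < 1 := by
    rwa [lt_inv_comm₀ one_pos (hpos a⁻¹ ha'), inv_one] at hsa_inv
  linarith [hpos _ hac]

theorem lt_inv_add_inv_of_sq_add_le_hasDerivAt {s s' : ℝ → ℝ} {a c r : ℝ} (ha : 0 < a)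
    (hc : 0 < c) (hs : ContinuousOn s (Icc 0 r)) (hpos : ∀ t ∈ Icc 0 r, 0 < s t)
    (hs' : ∀ t ∈ Ioo 0 r, HasDerivAt s (s' t) t)
    (hle : ∀ t ∈ Ioo 0 r, a * s t ^ 2 + c ≤ s' t) : r < a⁻¹ + c⁻¹ := by
  have hIcc : MapsTo (r - ·) (Icc 0 r) (Icc 0 r) := fun t ht =>
    ⟨by linarith [ht.2], by linarith [ht.1]⟩
  have hIoo : MapsTo (r - ·) (Ioo 0 r) (Ioo 0 r) := fun t ht =>
    ⟨by linarith [ht.2], by linarith [ht.1]⟩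
  exact lt_inv_add_inv_of_hasDerivAt_le_neg_sq_sub (s := fun t => s (r - t))
    (s' := fun t => -s' (r - t)) ha hc (hs.comp (continuousOn_const.sub continuousOn_id) hIcc)
    (fun t ht => hpos _ (hIcc ht)) (fun t ht => (hs' _ (hIoo ht)).comp_const_sub r t)
    (fun t ht => by linarith [hle _ (hIoo ht)])

theorem hasDerivAt_of_div_eq_mul_exp_integral {g₁ g₂ κ s m : ℝ → ℝ} {k r : ℝ}
    (hg₁ : ContDiffOn ℝ 1 g₁ (Ici 0)) (hg₂ : ContDiffOn ℝ 1 g₂ (Ici 0))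
    (hκ : ∀ u > 0, κ u = deriv (fun v => log (g₁ v / g₂ v)) u) (hκ0 : ∀ u > 0, κ u ≠ 0)
    (hs : ContinuousOn s (Icc 0 r)) (hspos : ∀ t ∈ Icc 0 r, 0 < s t)
    (hm : ContinuousOn m (Icc 0 r)) (hk : 0 < k)
    (h : ∀ t ∈ Icc 0 r, g₁ (s t) / g₂ (s t) = k * exp (∫ τ in (0:ℝ)..t, m τ)) :
    ∀ t ∈ Ioo 0 r, HasDerivAt s (m t / κ (s t)) t := by
  intro t ht
  have hnhds : Icc 0 r ∈ 𝓝 t := Icc_mem_nhds ht.1 ht.2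
  have hst := hspos t (Ioo_subset_Icc_self ht)
  have hne : g₁ (s t) ≠ 0 ∧ g₂ (s t) ≠ 0 :=
    div_ne_zero_iff.1 (by rw [h t (Ioo_subset_Icc_self ht)]; exact (mul_pos hk (exp_pos _)).ne')
  have hL : HasStrictDerivAt (fun v => log (g₁ v / g₂ v)) (κ (s t)) (s t) := by
    rw [hκ _ hst]
    exact (((hg₁.contDiffAt (Ici_mem_nhds hst)).div (hg₂.contDiffAt (Ici_mem_nhds hst))
      hne.2).log (div_ne_zero hne.1 hne.2)).hasStrictDerivAt one_ne_zero
  have hM : HasDerivAt (fun u => ∫ τ in (0:ℝ)..u, m τ) (m t) t :=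
    integral_hasDerivAt_right ((hm.mono (Icc_subset_Icc_right ht.2.le)).intervalIntegrable_of_Icc
      ht.1.le) ((hm.mono Ioo_subset_Icc_self).stronglyMeasurableAtFilter isOpen_Ioo t ht)
      (hm.continuousAt hnhds)
  refine hL.hasDerivAt_of_eventuallyEq_comp (hκ0 _ hst) (hs.continuousAt hnhds)
    (hM.const_add (log k)) ?_
  filter_upwards [hnhds] with u hu
  rw [h u hu, log_mul hk.ne' (exp_pos _).ne', log_exp]

theorem species_eq_mul_exp_integral {μ D s x : ℝ → ℝ} {b r : ℝ} (hr : 0 ≤ r)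
    (hμ : ContinuousOn μ (Ici 0)) (hD : IntervalIntegrable D volume 0 r)
    (hs : ContinuousOn s (Icc 0 r)) (hs0 : MapsTo s (Icc 0 r) (Ici 0))
    (hx : ContinuousOn x (Icc 0 r))
    (hxeq : ∀ t ∈ Icc 0 r, x t = x 0 + ∫ τ in (0:ℝ)..t, (μ (s τ) - D τ - b) * x τ) :
    ∀ t ∈ Icc 0 r, x t = x 0 * exp (∫ τ in (0:ℝ)..t, (μ (s τ) - D τ - b)) := by
  rw [← uIcc_of_le hr] at *
  exact eq_mul_exp_integral_of_eq_add_integral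
    (((hμ.comp hs hs0).intervalIntegrable.sub hD).sub intervalIntegrable_const) hx hxeq

structure IsChemostatSolution (μ₁ μ₂ g₁ g₂ D sIn : ℝ → ℝ) (b₁ b₂ r : ℝ) (x₁ x₂ s : ℝ → ℝ) :
    Prop where
  continuousOn_x₁ : ContinuousOn x₁ (Icc 0 r)
  continuousOn_x₂ : ContinuousOn x₂ (Icc 0 r)
  continuousOn_s : ContinuousOn s (Icc 0 r)
  x₁_eq : ∀ t ∈ Icc 0 r, x₁ t = x₁ 0 + ∫ τ in (0:ℝ)..t, (μ₁ (s τ) - D τ - b₁) * x₁ τ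
  x₂_eq : ∀ t ∈ Icc 0 r, x₂ t = x₂ 0 + ∫ τ in (0:ℝ)..t, (μ₂ (s τ) - D τ - b₂) * x₂ τ
  s_eq : ∀ t ∈ Icc 0 r, s t = s 0 + ∫ τ in (0:ℝ)..t,
    (D τ * (sIn τ - s τ) - g₁ (s τ) * x₁ τ - g₂ (s τ) * x₂ τ)

namespace IsChemostatSolution

variable {μ₁ μ₂ g₁ g₂ D sIn x₁ x₂ s χ₁ χ₂ σ : ℝ → ℝ} {b₁ b₂ r : ℝ}

theorem congr_substrate (h : IsChemostatSolution μ₁ μ₂ g₁ g₂ D sIn b₁ b₂ r χ₁ χ₂ σ)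
    (hσ : EqOn σ s (Icc 0 r)) : IsChemostatSolution μ₁ μ₂ g₁ g₂ D sIn b₁ b₂ r χ₁ χ₂ s := by
  have hσ' : ∀ t ∈ Icc 0 r, ∀ τ ∈ uIcc 0 t, σ τ = s τ := fun t ht τ hτ =>
    hσ (uIcc_subset_Icc ⟨le_rfl, ht.1.trans ht.2⟩ ht hτ)
  refine ⟨h.continuousOn_x₁, h.continuousOn_x₂, h.continuousOn_s.congr hσ.symm,
    fun t ht => ?_, fun t ht => ?_, fun t ht => ?_⟩
  · rw [h.x₁_eq t ht]
    exact congrArg _ (integral_congr fun τ hτ => by simp only [hσ' t ht τ hτ])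
  · rw [h.x₂_eq t ht]
    exact congrArg _ (integral_congr fun τ hτ => by simp only [hσ' t ht τ hτ])
  · rw [← hσ ht, ← hσ ⟨le_rfl, ht.1.trans ht.2⟩, h.s_eq t ht]
    exact congrArg _ (integral_congr fun τ hτ => by simp only [hσ' t ht τ hτ])

theorem consumption_eq (hx : IsChemostatSolution μ₁ μ₂ g₁ g₂ D sIn b₁ b₂ r x₁ x₂ s)
    (hχ : IsChemostatSolution μ₁ μ₂ g₁ g₂ D sIn b₁ b₂ r χ₁ χ₂ s) (hr : 0 < r)
    (hg₁ : ContinuousOn (fun t => g₁ (s t)) (Icc 0 r))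
    (hg₂ : ContinuousOn (fun t => g₂ (s t)) (Icc 0 r))
    (hD : IntervalIntegrable D volume 0 r)
    (hDsIn : IntervalIntegrable (fun t => D t * sIn t) volume 0 r) :
    ∀ t ∈ Icc 0 r, g₁ (s t) * x₁ t + g₂ (s t) * x₂ t = g₁ (s t) * χ₁ t + g₂ (s t) * χ₂ t := by
  have hsupply : IntervalIntegrable (fun t => D t * (sIn t - s t)) volume 0 r := by
    simp only [mul_sub]
    exact hDsIn.sub (hD.mul_continuousOn (uIcc_of_le hr.le ▸ hx.continuousOn_s))
  have hrate : ∀ {y₁ y₂ : ℝ → ℝ}, ContinuousOn y₁ (Icc 0 r) → ContinuousOn y₂ (Icc 0 r) →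
      IntervalIntegrable (fun τ => D τ * (sIn τ - s τ) - g₁ (s τ) * y₁ τ - g₂ (s τ) * y₂ τ)
        volume 0 r := fun h₁ h₂ =>
    (hsupply.sub ((hg₁.mul h₁).intervalIntegrable_of_Icc hr.le)).sub
      ((hg₂.mul h₂).intervalIntegrable_of_Icc hr.le)
  have hcont : ContinuousOn (fun τ => g₁ (s τ) * (χ₁ τ - x₁ τ) + g₂ (s τ) * (χ₂ τ - x₂ τ))
      (Icc 0 r) :=
    (hg₁.mul (hχ.continuousOn_x₁.sub hx.continuousOn_x₁)).add
      (hg₂.mul (hχ.continuousOn_x₂.sub hx.continuousOn_x₂))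
  have heq := eqOn_of_forall_integral_eq hr (hrate hx.continuousOn_x₁ hx.continuousOn_x₂)
    (hrate hχ.continuousOn_x₁ hχ.continuousOn_x₂)
    (hcont.congr fun τ _ => by simp only [Pi.sub_apply]; ring)
    fun t ht => add_left_cancel ((hx.s_eq t ht).symm.trans (hχ.s_eq t ht))
  intro t ht
  linarith [heq ht]

theorem eq_or_div_eq_mul_exp (hx : IsChemostatSolution μ₁ μ₂ g₁ g₂ D sIn b₁ b₂ r x₁ x₂ s)
    (hχ : IsChemostatSolution μ₁ μ₂ g₁ g₂ D sIn b₁ b₂ r χ₁ χ₂ s) (hr : 0 < r)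
    (hμ₁ : ContinuousOn μ₁ (Ici 0)) (hμ₂ : ContinuousOn μ₂ (Ici 0))
    (hg₁ : ContinuousOn g₁ (Ici 0)) (hg₂ : ContinuousOn g₂ (Ici 0))
    (hg₁pos : ∀ u > 0, 0 < g₁ u) (hg₂pos : ∀ u > 0, 0 < g₂ u)
    (hspos : ∀ t ∈ Icc 0 r, 0 < s t) (hD : IntervalIntegrable D volume 0 r)
    (hDsIn : IntervalIntegrable (fun t => D t * sIn t) volume 0 r) :
    (x₁ 0, x₂ 0) = (χ₁ 0, χ₂ 0) ∨ ∃ k > 0, ∀ t ∈ Icc 0 r,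
      g₁ (s t) / g₂ (s t) = k * exp (∫ τ in (0:ℝ)..t, (μ₂ (s τ) - μ₁ (s τ) + b₁ - b₂)) := by
  have h0 : (0 : ℝ) ∈ Icc 0 r := ⟨le_rfl, hr.le⟩
  have hs0 : MapsTo s (Icc 0 r) (Ici 0) := fun t ht => (hspos t ht).le
  have hs := hx.continuousOn_s
  have hcons := hx.consumption_eq hχ hr (hg₁.comp hs hs0) (hg₂.comp hs hs0) hD hDsIn
  rcases eq_or_ne (x₁ 0) (χ₁ 0) with h₁ | h₁
  · have h₂ := hcons 0 h0
    rw [h₁] at h₂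
    exact .inl (Prod.ext h₁ (mul_left_cancel₀ (hg₂pos _ (hspos 0 h0)).ne' (add_left_cancel h₂)))
  have hx₁ := species_eq_mul_exp_integral hr.le hμ₁ hD hs hs0 hx.continuousOn_x₁ hx.x₁_eq
  have hχ₁ := species_eq_mul_exp_integral hr.le hμ₁ hD hs hs0 hχ.continuousOn_x₁ hχ.x₁_eq
  have hx₂ := species_eq_mul_exp_integral hr.le hμ₂ hD hs hs0 hx.continuousOn_x₂ hx.x₂_eq
  have hχ₂ := species_eq_mul_exp_integral hr.le hμ₂ hD hs hs0 hχ.continuousOn_x₂ hχ.x₂_eq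
  have hcoef : ∀ {μ : ℝ → ℝ} {b : ℝ}, ContinuousOn μ (Ici 0) →
      IntervalIntegrable (fun τ => μ (s τ) - D τ - b) volume 0 r := fun hμ =>
    (((hμ.comp hs hs0).intervalIntegrable_of_Icc hr.le).sub hD).sub intervalIntegrable_const
  have hexp : ∀ t ∈ Icc 0 r, (∫ τ in (0:ℝ)..t, (μ₂ (s τ) - D τ - b₂)) -
      (∫ τ in (0:ℝ)..t, (μ₁ (s τ) - D τ - b₁)) =
        ∫ τ in (0:ℝ)..t, (μ₂ (s τ) - μ₁ (s τ) + b₁ - b₂) := fun t ht => by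
    have hsub : uIcc 0 t ⊆ uIcc 0 r := uIcc_subset_uIcc left_mem_uIcc (Icc_subset_uIcc ht)
    rw [← integral_sub ((hcoef hμ₂).mono_set hsub) ((hcoef hμ₁).mono_set hsub)]
    exact integral_congr fun τ _ => by ring
  have hα : x₁ 0 - χ₁ 0 ≠ 0 := sub_ne_zero.2 h₁
  have hratio : ∀ t ∈ Icc 0 r, g₁ (s t) / g₂ (s t) = -(x₂ 0 - χ₂ 0) / (x₁ 0 - χ₁ 0) *
      exp (∫ τ in (0:ℝ)..t, (μ₂ (s τ) - μ₁ (s τ) + b₁ - b₂)) := fun t ht => by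
    have h := hcons t ht
    rw [hx₁ t ht, hχ₁ t ht, hx₂ t ht, hχ₂ t ht] at h
    rw [← hexp t ht, exp_sub, div_eq_iff (hg₂pos _ (hspos t ht)).ne']
    field_simp
    linear_combination h
  refine .inr ⟨_, ?_, hratio⟩
  have hk := hratio 0 h0
  simp only [integral_same, exp_zero, mul_one] at hk
  exact hk ▸ div_pos (hg₁pos _ (hspos 0 h0)) (hg₂pos _ (hspos 0 h0))

end IsChemostatSolution

theorem two_species_chemostat_strongly_observable_A3_A4_general
    (μ₁ μ₂ g₁ g₂ : ℝ → ℝ)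
    (hμ₁C : ContDiffOn ℝ 1 μ₁ (Ici 0)) (hμ₂C : ContDiffOn ℝ 1 μ₂ (Ici 0))
    (hg₁C : ContDiffOn ℝ 1 g₁ (Ici 0)) (hg₂C : ContDiffOn ℝ 1 g₂ (Ici 0))
    (hg₁pos : ∀ u > (0:ℝ), 0 < g₁ u) (hg₂pos : ∀ u > (0:ℝ), 0 < g₂ u)
    (b₁ b₂ : ℝ)
    (κ : ℝ → ℝ)
    (hκ : ∀ u : ℝ, κ u = deriv (fun v => Real.log (g₁ v / g₂ v)) u)
    (a c : ℝ) (ha : 0 < a) (hc : 0 < c)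
    (hA : (∀ u > (0:ℝ), κ u ≠ 0 ∧ (μ₂ u - μ₁ u + b₁ - b₂) / κ u ≤ -a * u ^ 2 - c) ∨
          (∀ u > (0:ℝ), κ u ≠ 0 ∧ a * u ^ 2 + c ≤ (μ₂ u - μ₁ u + b₁ - b₂) / κ u))
    (r : ℝ) (hr : c⁻¹ + a⁻¹ ≤ r)
    (D sIn : ℝ → ℝ) (hDmeas : Measurable D) (hsInmeas : Measurable sIn)
    (hDnn : ∀ t ∈ Icc 0 r, 0 ≤ D t) (hsInnn : ∀ t ∈ Icc 0 r, 0 ≤ sIn t)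
    (hDbdd : ∃ M, ∀ t ∈ Icc 0 r, D t ≤ M) (hsInbdd : ∃ M, ∀ t ∈ Icc 0 r, sIn t ≤ M)
    (x₁ x₂ s χ₁ χ₂ σ : ℝ → ℝ)
    (hx₁C : ContinuousOn x₁ (Icc 0 r)) (hx₂C : ContinuousOn x₂ (Icc 0 r))
    (hsC : ContinuousOn s (Icc 0 r))
    (hχ₁C : ContinuousOn χ₁ (Icc 0 r)) (hχ₂C : ContinuousOn χ₂ (Icc 0 r))
    (hσC : ContinuousOn σ (Icc 0 r))
    (hspos : ∀ t ∈ Icc 0 r, 0 < s t)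
    (hx₁eq : ∀ t ∈ Icc 0 r,
      x₁ t = x₁ 0 + ∫ τ in (0:ℝ)..t, (μ₁ (s τ) - D τ - b₁) * x₁ τ)
    (hx₂eq : ∀ t ∈ Icc 0 r,
      x₂ t = x₂ 0 + ∫ τ in (0:ℝ)..t, (μ₂ (s τ) - D τ - b₂) * x₂ τ)
    (hseq : ∀ t ∈ Icc 0 r,
      s t = s 0 + ∫ τ in (0:ℝ)..t,
        (D τ * (sIn τ - s τ) - g₁ (s τ) * x₁ τ - g₂ (s τ) * x₂ τ))
    (hχ₁eq : ∀ t ∈ Icc 0 r,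
      χ₁ t = χ₁ 0 + ∫ τ in (0:ℝ)..t, (μ₁ (σ τ) - D τ - b₁) * χ₁ τ)
    (hχ₂eq : ∀ t ∈ Icc 0 r,
      χ₂ t = χ₂ 0 + ∫ τ in (0:ℝ)..t, (μ₂ (σ τ) - D τ - b₂) * χ₂ τ)
    (hσeq : ∀ t ∈ Icc 0 r,
      σ t = σ 0 + ∫ τ in (0:ℝ)..t,
        (D τ * (sIn τ - σ τ) - g₁ (σ τ) * χ₁ τ - g₂ (σ τ) * χ₂ τ))
    (hout : ∀ t ∈ Icc 0 r, s t = σ t) :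
    (x₁ 0, x₂ 0) = (χ₁ 0, χ₂ 0) := by
  have hr0 : 0 < r := (by positivity : (0 : ℝ) < c⁻¹ + a⁻¹).trans_le hr
  obtain ⟨MD, hMD⟩ := hDbdd
  obtain ⟨MsIn, hMsIn⟩ := hsInbdd
  have hD := hDmeas.intervalIntegrable_of_nonneg_of_le hr0.le hDnn hMD
  have hDsIn := (hDmeas.mul hsInmeas).intervalIntegrable_of_nonneg_of_le hr0.le
    (fun t ht => mul_nonneg (hDnn t ht) (hsInnn t ht))
    fun t ht => mul_le_mul (hMD t ht) (hMsIn t ht) (hsInnn t ht) ((hDnn t ht).trans (hMD t ht))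
  have hx : IsChemostatSolution μ₁ μ₂ g₁ g₂ D sIn b₁ b₂ r x₁ x₂ s :=
    ⟨hx₁C, hx₂C, hsC, hx₁eq, hx₂eq, hseq⟩
  have hχ : IsChemostatSolution μ₁ μ₂ g₁ g₂ D sIn b₁ b₂ r χ₁ χ₂ s :=
    IsChemostatSolution.congr_substrate ⟨hχ₁C, hχ₂C, hσC, hχ₁eq, hχ₂eq, hσeq⟩
      fun t ht => (hout t ht).symm
  obtain heq | ⟨k, hk, hratio⟩ := hx.eq_or_div_eq_mul_exp hχ hr0 hμ₁C.continuousOn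
    hμ₂C.continuousOn hg₁C.continuousOn hg₂C.continuousOn hg₁pos hg₂pos hspos hD hDsIn
  · exact heq
  have hs0 : MapsTo s (Icc 0 r) (Ici 0) := fun t ht => (hspos t ht).le
  have hs' := hasDerivAt_of_div_eq_mul_exp_integral hg₁C hg₂C (fun u _ => hκ u)
    (fun u hu => hA.elim (fun h => (h u hu).1) (fun h => (h u hu).1)) hsC hspos
    (((hμ₂C.continuousOn.comp hsC hs0).sub (hμ₁C.continuousOn.comp hsC hs0)).add
      continuousOn_const |>.sub continuousOn_const) hk hratio
  have hspos' : ∀ t ∈ Ioo 0 r, 0 < s t := fun t ht => hspos t (Ioo_subset_Icc_self ht)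
  rcases hA with hA3 | hA4
  · linarith [lt_inv_add_inv_of_hasDerivAt_le_neg_sq_sub ha hc hsC hspos hs'
      fun t ht => (hA3 _ (hspos' t ht)).2]
  · linarith [lt_inv_add_inv_of_sq_add_le_hasDerivAt ha hc hsC hspos hs'
      fun t ht => (hA4 _ (hspos' t ht)).2]

/-- Theorem 3.9: under condition (A3) or (A4), the two-species chemostat (with substrate
constrained to `(0,∞)`) is strongly observable in any time `r ≥ c⁻¹ + a⁻¹`. -/
theorem two_species_chemostat_strongly_observable_A3_A4
    (μ₁ μ₂ g₁ g₂ : ℝ → ℝ)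
    (hμ₁C : ContDiffOn ℝ 1 μ₁ (Ici 0)) (hμ₂C : ContDiffOn ℝ 1 μ₂ (Ici 0))
    (hg₁C : ContDiffOn ℝ 1 g₁ (Ici 0)) (hg₂C : ContDiffOn ℝ 1 g₂ (Ici 0))
    (hμ₁bdd : ∃ M, ∀ u ≥ (0:ℝ), μ₁ u ≤ M) (hμ₂bdd : ∃ M, ∀ u ≥ (0:ℝ), μ₂ u ≤ M)
    (hg₁bdd : ∃ M, ∀ u ≥ (0:ℝ), g₁ u ≤ M) (hg₂bdd : ∃ M, ∀ u ≥ (0:ℝ), g₂ u ≤ M)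
    (hμ₁0 : μ₁ 0 = 0) (hμ₂0 : μ₂ 0 = 0) (hg₁0 : g₁ 0 = 0) (hg₂0 : g₂ 0 = 0)
    (hμ₁pos : ∀ u > (0:ℝ), 0 < μ₁ u) (hμ₂pos : ∀ u > (0:ℝ), 0 < μ₂ u)
    (hg₁pos : ∀ u > (0:ℝ), 0 < g₁ u) (hg₂pos : ∀ u > (0:ℝ), 0 < g₂ u)
    (b₁ b₂ : ℝ) (hb₁ : 0 ≤ b₁) (hb₂ : 0 ≤ b₂)
    (κ : ℝ → ℝ)
    (hκ : ∀ u : ℝ, κ u = deriv (fun v => Real.log (g₁ v / g₂ v)) u)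
    (a c : ℝ) (ha : 0 < a) (hc : 0 < c)
    (hA : (∀ u > (0:ℝ), κ u ≠ 0 ∧ (μ₂ u - μ₁ u + b₁ - b₂) / κ u ≤ -a * u ^ 2 - c) ∨
          (∀ u > (0:ℝ), κ u ≠ 0 ∧ a * u ^ 2 + c ≤ (μ₂ u - μ₁ u + b₁ - b₂) / κ u))
    (r : ℝ) (hr : c⁻¹ + a⁻¹ ≤ r)
    (D sIn : ℝ → ℝ) (hDmeas : Measurable D) (hsInmeas : Measurable sIn)
    (hDnn : ∀ t ∈ Icc 0 r, 0 ≤ D t) (hsInnn : ∀ t ∈ Icc 0 r, 0 ≤ sIn t)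
    (hDbdd : ∃ M, ∀ t ∈ Icc 0 r, D t ≤ M) (hsInbdd : ∃ M, ∀ t ∈ Icc 0 r, sIn t ≤ M)
    (x₁ x₂ s χ₁ χ₂ σ : ℝ → ℝ)
    (hx₁C : ContinuousOn x₁ (Icc 0 r)) (hx₂C : ContinuousOn x₂ (Icc 0 r))
    (hsC : ContinuousOn s (Icc 0 r))
    (hχ₁C : ContinuousOn χ₁ (Icc 0 r)) (hχ₂C : ContinuousOn χ₂ (Icc 0 r))
    (hσC : ContinuousOn σ (Icc 0 r))
    (hx₁pos : ∀ t ∈ Icc 0 r, 0 < x₁ t) (hx₂pos : ∀ t ∈ Icc 0 r, 0 < x₂ t)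
    (hspos : ∀ t ∈ Icc 0 r, 0 < s t)
    (hχ₁pos : ∀ t ∈ Icc 0 r, 0 < χ₁ t) (hχ₂pos : ∀ t ∈ Icc 0 r, 0 < χ₂ t)
    (hσpos : ∀ t ∈ Icc 0 r, 0 < σ t)
    (hx₁eq : ∀ t ∈ Icc 0 r,
      x₁ t = x₁ 0 + ∫ τ in (0:ℝ)..t, (μ₁ (s τ) - D τ - b₁) * x₁ τ)
    (hx₂eq : ∀ t ∈ Icc 0 r,
      x₂ t = x₂ 0 + ∫ τ in (0:ℝ)..t, (μ₂ (s τ) - D τ - b₂) * x₂ τ)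
    (hseq : ∀ t ∈ Icc 0 r,
      s t = s 0 + ∫ τ in (0:ℝ)..t,
        (D τ * (sIn τ - s τ) - g₁ (s τ) * x₁ τ - g₂ (s τ) * x₂ τ))
    (hχ₁eq : ∀ t ∈ Icc 0 r,
      χ₁ t = χ₁ 0 + ∫ τ in (0:ℝ)..t, (μ₁ (σ τ) - D τ - b₁) * χ₁ τ)
    (hχ₂eq : ∀ t ∈ Icc 0 r,
      χ₂ t = χ₂ 0 + ∫ τ in (0:ℝ)..t, (μ₂ (σ τ) - D τ - b₂) * χ₂ τ)
    (hσeq : ∀ t ∈ Icc 0 r,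
      σ t = σ 0 + ∫ τ in (0:ℝ)..t,
        (D τ * (sIn τ - σ τ) - g₁ (σ τ) * χ₁ τ - g₂ (σ τ) * χ₂ τ))
    (hout : ∀ t ∈ Icc 0 r, s t = σ t) :
    (x₁ 0, x₂ 0) = (χ₁ 0, χ₂ 0) :=
  two_species_chemostat_strongly_observable_A3_A4_general μ₁ μ₂ g₁ g₂ hμ₁C hμ₂C hg₁C hg₂C hg₁pos
    hg₂pos b₁ b₂ κ hκ a c ha hc hA r hr D sIn hDmeas hsInmeas hDnn hsInnn hDbdd hsInbdd x₁ x₂ s χ₁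
    χ₂ σ hx₁C hx₂C hsC hχ₁C hχ₂C hσC hspos hx₁eq hx₂eq hseq hχ₁eq hχ₂eq hσeq hout
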